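/- arXiv:2303.15779 — 8 statements merged into one kernel-verified Lean document; each statement's English description precedes it below -/
import Mathlib

section
/- Let D = diag(d_1,…,d_n), M = [[D,0],[0,D]], J the canonical symplectic matrix, and define a_0,…,a_{2n} (with a_{2n}=1) via ∏_{j}(λ²+d_j²) = Σ_i a_i λ^i, so a_i = 0 for odd i. Then for each k with 0 ≤ k ≤ n−1 and all v ∈ ℝ^{2n}, vᵀ M [ (JM)^{2k} + a_{2n−2}(JM)^{2k−2} + ⋯ + a_{2n−2k} I ] v = vᵀ [[F_k,0],[0,F_k]] v, where F_k = diag(f_1,…,f_n) with f_l = d_l · Σ_{j_1<⋯<j_k, all ≠ l} (d_{j_1}⋯d_{j_k})². -/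
noncomputable section
open Matrix Polynomial

/-- The canonical symplectic matrix `J = [[0, I], [-I, 0]]`. -/
def Jmat (n : ℕ) : Matrix (Fin n ⊕ Fin n) (Fin n ⊕ Fin n) ℝ :=
  Matrix.fromBlocks 0 1 (-1) 0

/-- `M = [[D,0],[0,D]]` for `D = diag d`. -/
def Mmat {n : ℕ} (d : Fin n → ℝ) : Matrix (Fin n ⊕ Fin n) (Fin n ⊕ Fin n) ℝ :=
  Matrix.fromBlocks (Matrix.diagonal d) 0 0 (Matrix.diagonal d)

/-- `F_k = diag(f_1,…,f_n)` with `f_l = d_l · Σ_{j_1<⋯<j_k, all ≠ l} (d_{j_1}⋯d_{j_k})²`. -/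
def Fmat {n : ℕ} (d : Fin n → ℝ) (k : ℕ) : Matrix (Fin n) (Fin n) ℝ :=
  Matrix.diagonal fun l =>
    d l * ∑ s ∈ (Finset.univ.erase l).powersetCard k, (∏ j ∈ s, d j) ^ 2

namespace QFAux

/-- elementary symmetric functions of the squares -/
def e {n : ℕ} (d : Fin n → ℝ) (s : Finset (Fin n)) (i : ℕ) : ℝ :=
  ∑ t ∈ s.powersetCard i, (∏ j ∈ t, d j) ^ 2

lemma e_insert {n : ℕ} (d : Fin n → ℝ) (l : Fin n) (s : Finset (Fin n)) (hl : l ∉ s) (i : ℕ) :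
    e d (insert l s) (i + 1) = e d s (i + 1) + d l ^ 2 * e d s i := by
  unfold e
  rw [Finset.powersetCard_succ_insert hl, Finset.sum_union, Finset.sum_image, Finset.mul_sum]
  · congr 1
    refine Finset.sum_congr rfl fun t ht => ?_
    have hlt : l ∉ t := fun h => hl ((Finset.mem_powersetCard.mp ht).1 h)
    rw [Finset.prod_insert hlt, mul_pow]
  · intro t ht u hu h
    have hlt : l ∉ t := fun hc => hl ((Finset.mem_powersetCard.mp ht).1 hc)
    have hlu : l ∉ u := fun hc => hl ((Finset.mem_powersetCard.mp hu).1 hc)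
    have := congrArg (fun z => Finset.erase z l) h
    simpa [Finset.erase_insert hlt, Finset.erase_insert hlu] using this
  · rw [Finset.disjoint_left]
    intro t ht hti
    obtain ⟨u, hu, rfl⟩ := Finset.mem_image.mp hti
    exact hl ((Finset.mem_powersetCard.mp ht).1 (Finset.mem_insert_self l u))

lemma telescope {n : ℕ} (d : Fin n → ℝ) (l : Fin n) (k : ℕ) :
    ∑ i ∈ Finset.range (k + 1), e d Finset.univ i * (-(d l ^ 2)) ^ (k - i)
      = e d (Finset.univ.erase l) k := by
  induction k with
  | zero => simp [e]
  | succ k ih =>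
    rw [Finset.sum_range_succ]
    have h1 : ∑ i ∈ Finset.range (k + 1), e d Finset.univ i * (-(d l ^ 2)) ^ (k + 1 - i)
        = (-(d l ^ 2)) * ∑ i ∈ Finset.range (k + 1), e d Finset.univ i * (-(d l ^ 2)) ^ (k - i) := by
      rw [Finset.mul_sum]
      refine Finset.sum_congr rfl fun i hi => ?_
      have hik : i < k + 1 := Finset.mem_range.mp hi
      have : k + 1 - i = (k - i) + 1 := by omega
      rw [this, pow_succ]; ring
    rw [h1, ih]
    have he := e_insert d l (Finset.univ.erase l) (Finset.notMem_erase l _) k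
    rw [Finset.insert_erase (Finset.mem_univ l)] at he
    rw [he]
    simp only [Nat.sub_self, pow_zero, mul_one]
    ring

lemma coeff_a {n : ℕ} (d : Fin n → ℝ) (a : ℕ → ℝ)
    (ha : ∏ j : Fin n, ((X : ℝ[X]) ^ 2 + C (d j ^ 2))
        = ∑ i ∈ Finset.range (2 * n + 1), C (a i) * X ^ i)
    (i : ℕ) (hi : i ≤ n) : a (2 * n - 2 * i) = e d Finset.univ i := by
  have hexp : ∏ j : Fin n, ((X : ℝ[X]) ^ 2 + C (d j ^ 2))
      = Polynomial.expand ℝ 2 (∏ j : Fin n, ((X : ℝ[X]) + C (d j ^ 2))) := by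
    rw [map_prod]
    refine Finset.prod_congr rfl fun j _ => ?_
    rw [map_add, Polynomial.expand_X, Polynomial.expand_C]
  have hc := congrArg (fun p => Polynomial.coeff p (2 * (n - i))) ha
  rw [hexp] at hc
  rw [Polynomial.coeff_expand (by norm_num : 0 < 2)] at hc
  rw [if_pos ⟨n - i, rfl⟩, Nat.mul_div_cancel_left _ (by norm_num : 0 < 2)] at hc
  have hcard : (Finset.univ : Finset (Fin n)).card = n := by simp
  have hle : n - i ≤ (Finset.univ : Finset (Fin n)).card := by omega
  rw [Finset.prod_X_add_C_coeff _ _ hle] at hc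
  rw [hcard, Nat.sub_sub_self hi] at hc
  have hrhs : (∑ j ∈ Finset.range (2 * n + 1), C (a j) * X ^ j).coeff (2 * (n - i))
      = a (2 * (n - i)) := by
    rw [Polynomial.finset_sum_coeff]
    simp only [Polynomial.coeff_C_mul, Polynomial.coeff_X_pow, mul_ite, mul_one, mul_zero]
    rw [Finset.sum_ite_eq (Finset.range (2 * n + 1))]
    rw [if_pos (Finset.mem_range.mpr (by omega))]
  rw [hrhs] at hc
  have h2 : 2 * n - 2 * i = 2 * (n - i) := by omega
  rw [h2, ← hc]
  unfold e
  refine Finset.sum_congr rfl fun t _ => ?_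
  rw [Finset.prod_pow]

lemma JM_pow {n : ℕ} (d : Fin n → ℝ) (m : ℕ) :
    (Jmat n * Mmat d) ^ (2 * m)
      = Matrix.fromBlocks (Matrix.diagonal fun l => (-(d l ^ 2)) ^ m) 0 0
          (Matrix.diagonal fun l => (-(d l ^ 2)) ^ m) := by
  induction m with
  | zero => simp [← Matrix.fromBlocks_one]
  | succ m ih =>
    have h2 : (Jmat n * Mmat d) ^ 2
        = Matrix.fromBlocks (Matrix.diagonal fun l => -(d l ^ 2)) 0 0
            (Matrix.diagonal fun l => -(d l ^ 2)) := by
      rw [pow_two, Jmat, Mmat, Matrix.fromBlocks_multiply, Matrix.fromBlocks_multiply]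
      simp [Matrix.diagonal_mul_diagonal, pow_two]
    rw [show 2 * (m + 1) = 2 * m + 2 by ring, pow_add, ih, h2, Matrix.fromBlocks_multiply]
    simp [Matrix.diagonal_mul_diagonal, pow_succ]

lemma sum_fromBlocks {ι : Type*} {p q : ℕ} (s : Finset ι)
    (A : ι → Matrix (Fin p) (Fin p) ℝ) (B : ι → Matrix (Fin p) (Fin q) ℝ)
    (Cm : ι → Matrix (Fin q) (Fin p) ℝ) (E : ι → Matrix (Fin q) (Fin q) ℝ) :
    ∑ i ∈ s, Matrix.fromBlocks (A i) (B i) (Cm i) (E i)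
      = Matrix.fromBlocks (∑ i ∈ s, A i) (∑ i ∈ s, B i) (∑ i ∈ s, Cm i) (∑ i ∈ s, E i) := by
  ext (x | x) (y | y) <;> simp [Matrix.sum_apply]

lemma diagonal_sum {ι : Type*} {p : ℕ} (s : Finset ι) (f : ι → Fin p → ℝ) :
    ∑ i ∈ s, Matrix.diagonal (f i) = Matrix.diagonal (fun l => ∑ i ∈ s, f i l) := by
  ext x y
  by_cases h : x = y <;> simp [Matrix.sum_apply, Matrix.diagonal_apply, h]

end QFAux

/-- The quadratic form `vᵀ M [(JM)^{2k} + a_{2n-2}(JM)^{2k-2} + ⋯ + a_{2n-2k} I] v`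
equals `vᵀ [[F_k,0],[0,F_k]] v`, where the `a_i` are the coefficients of
`∏_j (λ² + d_j²)` with `a_{2n} = 1`. -/
theorem quadratic_form_eq_Fmat {n : ℕ} (d : Fin n → ℝ) (a : ℕ → ℝ)
    (ha2n : a (2 * n) = 1)
    (ha : ∏ j : Fin n, ((X : ℝ[X]) ^ 2 + C (d j ^ 2))
        = ∑ i ∈ Finset.range (2 * n + 1), C (a i) * X ^ i) :
    ∀ k < n, ∀ v : Fin n ⊕ Fin n → ℝ,
      v ⬝ᵥ ((Mmat d *
          (∑ i ∈ Finset.range (k + 1),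
            a (2 * n - 2 * i) • (Jmat n * Mmat d) ^ (2 * (k - i)))) *ᵥ v)
        = v ⬝ᵥ (Matrix.fromBlocks (Fmat d k) 0 0 (Fmat d k) *ᵥ v) := by
  intro k hk v
  have key : Mmat d * (∑ i ∈ Finset.range (k + 1),
        a (2 * n - 2 * i) • (Jmat n * Mmat d) ^ (2 * (k - i)))
      = Matrix.fromBlocks (Fmat d k) 0 0 (Fmat d k) := by
    have hsum : (∑ i ∈ Finset.range (k + 1),
          a (2 * n - 2 * i) • (Jmat n * Mmat d) ^ (2 * (k - i)))
        = Matrix.fromBlocks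
            (Matrix.diagonal fun l => ∑ i ∈ Finset.range (k + 1),
              a (2 * n - 2 * i) * (-(d l ^ 2)) ^ (k - i)) 0 0
            (Matrix.diagonal fun l => ∑ i ∈ Finset.range (k + 1),
              a (2 * n - 2 * i) * (-(d l ^ 2)) ^ (k - i)) := by
      have : ∀ i ∈ Finset.range (k + 1),
          a (2 * n - 2 * i) • (Jmat n * Mmat d) ^ (2 * (k - i))
            = Matrix.fromBlocks
                (Matrix.diagonal fun l => a (2 * n - 2 * i) * (-(d l ^ 2)) ^ (k - i)) 0 0
                (Matrix.diagonal fun l => a (2 * n - 2 * i) * (-(d l ^ 2)) ^ (k - i)) := by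
        intro i _
        rw [QFAux.JM_pow, Matrix.fromBlocks_smul,
          ← Matrix.diagonal_smul, smul_zero]
        rfl
      rw [Finset.sum_congr rfl this, QFAux.sum_fromBlocks, QFAux.diagonal_sum]
      simp
    rw [hsum, Mmat, Matrix.fromBlocks_multiply]
    simp only [Matrix.mul_zero, Matrix.zero_mul, add_zero, zero_add,
      Matrix.diagonal_mul_diagonal]
    have hdiag : (Matrix.diagonal fun l => d l * ∑ i ∈ Finset.range (k + 1),
          a (2 * n - 2 * i) * (-(d l ^ 2)) ^ (k - i)) = Fmat d k := by
      unfold Fmat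
      refine congrArg Matrix.diagonal (funext fun l => ?_)
      have hco : ∀ i ∈ Finset.range (k + 1),
          a (2 * n - 2 * i) * (-(d l ^ 2)) ^ (k - i)
            = QFAux.e d Finset.univ i * (-(d l ^ 2)) ^ (k - i) := by
        intro i hi
        rw [QFAux.coeff_a d a ha i (by have := Finset.mem_range.mp hi; omega)]
      rw [Finset.sum_congr rfl hco, QFAux.telescope]
      rfl
    rw [hdiag]
  rw [key]
end
end

section
/- For a linear port-Hamiltonian system in normal form ż = JQz + Bu, y = BᵀQz with Q symmetric and positive definite, the system is controllable if and only if it is observable. -/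
noncomputable section
open Matrix Polynomial

/-- For a linear port-Hamiltonian system `ż = JQz + Bu`, `y = BᵀQz` with `Q` symmetric
positive definite, controllability (the vectors `(JQ)^k B`, `k < 2n`, span `ℝ^{2n}`) is
equivalent to observability (the vectors `((JQ)ᵀ)^k (QB)`, `k < 2n`, span `ℝ^{2n}`). -/
theorem pH_controllable_iff_observable {n : ℕ}
    (Q : Matrix (Fin n ⊕ Fin n) (Fin n ⊕ Fin n) ℝ)
    (hQs : Q.IsSymm) (hQp : Q.PosDef) (B : Fin n ⊕ Fin n → ℝ) :
    Submodule.span ℝ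
        (Set.range fun k : Fin (2 * n) => ((Jmat n * Q) ^ (k : ℕ)) *ᵥ B) = ⊤ ↔
      Submodule.span ℝ
        (Set.range fun k : Fin (2 * n) => ((Jmat n * Q)ᵀ ^ (k : ℕ)) *ᵥ (Q *ᵥ B)) = ⊤ := by
  set A := Jmat n * Q with hA
  -- J is antisymmetric
  have hJ : (Jmat n)ᵀ = -(Jmat n) := by
    ext (i|i) (j|j) <;> simp [Jmat, Matrix.fromBlocks, Matrix.one_apply, eq_comm]
  have hAT : Aᵀ = -(Q * Jmat n) := by
    rw [hA, Matrix.transpose_mul, hQs.eq, hJ]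
    noncomm_ring
  -- key identity
  have key : ∀ k : ℕ, Aᵀ ^ k *ᵥ (Q *ᵥ B) = ((-1 : ℝ) ^ k) • (Q *ᵥ (A ^ k *ᵥ B)) := by
    intro k
    induction k with
    | zero => simp
    | succ k ih =>
      have h1 : Aᵀ ^ (k + 1) *ᵥ (Q *ᵥ B) = Aᵀ *ᵥ (Aᵀ ^ k *ᵥ (Q *ᵥ B)) := by
        simp only [Matrix.mulVec_mulVec]
        rw [← Matrix.mul_assoc, ← pow_succ']
      rw [h1, ih, Matrix.mulVec_smul, hAT, Matrix.neg_mulVec]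
      simp only [Matrix.mulVec_mulVec]
      rw [pow_succ (-1 : ℝ) k, mul_smul, neg_one_smul]
      congr 2
      rw [pow_succ' A k, hA]
      noncomm_ring
  -- Q is a unit
  have hQu : IsUnit Q := (Matrix.isUnit_iff_isUnit_det Q).mpr (isUnit_iff_ne_zero.mpr hQp.det_pos.ne')
  have hinj : Function.Injective Q.mulVecLin := Matrix.mulVec_injective_iff_isUnit.mpr hQu
  have hsurj : Function.Surjective Q.mulVecLin := Matrix.mulVec_surjective_iff_isUnit.mpr hQu
  have hspan : Submodule.span ℝ
      (Set.range fun k : Fin (2 * n) => (Aᵀ ^ (k : ℕ)) *ᵥ (Q *ᵥ B)) =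
      Submodule.map Q.mulVecLin
        (Submodule.span ℝ (Set.range fun k : Fin (2 * n) => (A ^ (k : ℕ)) *ᵥ B)) := by
    apply le_antisymm
    · rw [Submodule.span_le]
      rintro _ ⟨k, rfl⟩
      simp only
      rw [key]
      exact Submodule.smul_mem _ _
        (Submodule.mem_map_of_mem (Submodule.subset_span ⟨k, rfl⟩))
    · rw [Submodule.map_span, Submodule.span_le]
      rintro _ ⟨_, ⟨k, rfl⟩, rfl⟩
      have : Q.mulVecLin ((A ^ (k : ℕ)) *ᵥ B) =
          ((-1 : ℝ) ^ (k : ℕ)) • ((Aᵀ ^ (k : ℕ)) *ᵥ (Q *ᵥ B)) := by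
        rw [key, smul_smul, ← pow_add, Even.neg_one_pow ⟨(k : ℕ), rfl⟩, one_smul]
        rfl
      rw [this]
      exact Submodule.smul_mem _ _ (Submodule.subset_span ⟨k, rfl⟩)
  rw [hspan]
  constructor
  · intro h
    rw [h, Submodule.map_top, LinearMap.range_eq_top]
    exact hsurj
  · intro h
    apply Submodule.map_injective_of_injective hinj
    rw [h, Submodule.map_top]
    exact (LinearMap.range_eq_top.mpr hsurj).symm
end
end

section
/- Let M = [[D,0],[0,D]] with D = diag(d_1,…,d_n), d_i > 0 and all d_i distinct. If U ∈ M_{2n}(ℝ) is orthogonal, symplectic, and satisfies U M Uᵀ = M, then U has the block form [[C, −S],[S, C]] with C = diag(cos θ_1,…,cos θ_n) and S = diag(sin θ_1,…,sin θ_n) for some angles θ_1,…,θ_n. -/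
/-! Orthogonality turns `U M Uᵀ = M` into `U M = M U`. As the `dᵢ` are distinct, `U` preserves
each eigenspace `span(eᵢ, eₙ₊ᵢ)` of `M`, so its four `n × n` blocks are diagonal. On each such
plane `U` acts by a `2 × 2` matrix that is orthogonal and, by the symplectic condition, has
determinant `1`: a rotation. -/

noncomputable section
open Matrix Polynomial

theorem exists_cos_eq_and_sin_eq_of_sq_add_sq_eq_one {a c : ℝ} (h : a ^ 2 + c ^ 2 = 1) :
    ∃ θ : ℝ, Real.cos θ = a ∧ Real.sin θ = c := by
  set z : ℂ := ⟨a, c⟩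
  have hz : ‖z‖ = 1 := by
    rw [Complex.norm_def, Complex.normSq_mk, ← sq, ← sq, h, Real.sqrt_one]
  exact ⟨z.arg, by simpa [hz] using Complex.norm_mul_cos_arg z,
    by simpa [hz] using Complex.norm_mul_sin_arg z⟩

theorem eq_neg_and_eq_of_sq_add_sq_eq_one_of_det_eq_one {R : Type*} [CommRing R] {a b c d : R}
    (hnorm : a ^ 2 + c ^ 2 = 1) (horth : a * b + c * d = 0) (hdet : a * d - c * b = 1) :
    b = -c ∧ d = a :=
  ⟨by linear_combination (-b) * hnorm + a * horth - c * hdet,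
    by linear_combination (-d) * hnorm + c * horth + a * hdet⟩

namespace Matrix

variable {ι R : Type*} [Fintype ι] [DecidableEq ι]

theorem commute_of_mul_mul_transpose_eq [Semiring R] {U M : Matrix ι ι R}
    (horth : Uᵀ * U = 1) (hM : U * M * Uᵀ = M) : Commute U M :=
  calc U * M = U * M * Uᵀ * U := by rw [Matrix.mul_assoc _ Uᵀ, horth, Matrix.mul_one]
    _ = M * U := by rw [hM]

theorem apply_eq_zero_of_commute_diagonal [CommRing R] [NoZeroDivisors R] {U : Matrix ι ι R}
    {e : ι → R} (h : Commute U (diagonal e)) {x y : ι} (hxy : e x ≠ e y) : U x y = 0 := by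
  have hentry := congr_fun₂ h.eq x y
  rw [mul_diagonal, diagonal_mul] at hentry
  have : (e x - e y) * U x y = 0 := by linear_combination -hentry
  exact (mul_eq_zero.1 this).resolve_left (sub_ne_zero.2 hxy)

theorem eq_fromBlocks_diagonal_of_commute [CommRing R] [NoZeroDivisors R] {e : ι → R}
    (he : Function.Injective e) {U : Matrix (ι ⊕ ι) (ι ⊕ ι) R}
    (h : Commute U (fromBlocks (diagonal e) 0 0 (diagonal e))) :
    U = fromBlocks (diagonal fun i => U (.inl i) (.inl i)) (diagonal fun i => U (.inl i) (.inr i))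
      (diagonal fun i => U (.inr i) (.inl i)) (diagonal fun i => U (.inr i) (.inr i)) := by
  rw [fromBlocks_diagonal] at h
  ext (i | i) (j | j) <;> obtain rfl | hij := eq_or_ne i j <;> simp [*]
  all_goals exact apply_eq_zero_of_commute_diagonal h (he.ne hij)

theorem exists_angles_of_orthogonal_symplectic_fromBlocks_diagonal {a b c d : ι → ℝ}
    (horth : (fromBlocks (diagonal a) (diagonal b) (diagonal c) (diagonal d))ᵀ *
      fromBlocks (diagonal a) (diagonal b) (diagonal c) (diagonal d) = 1)
    (hsymp : (fromBlocks (diagonal a) (diagonal b) (diagonal c) (diagonal d))ᵀ *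
      fromBlocks 0 1 (-1) 0 * fromBlocks (diagonal a) (diagonal b) (diagonal c) (diagonal d) =
      fromBlocks 0 1 (-1) 0) :
    ∃ θ : ι → ℝ, fromBlocks (diagonal a) (diagonal b) (diagonal c) (diagonal d) =
      fromBlocks (diagonal fun i => Real.cos (θ i)) (-(diagonal fun i => Real.sin (θ i)))
        (diagonal fun i => Real.sin (θ i)) (diagonal fun i => Real.cos (θ i)) := by
  simp only [fromBlocks_transpose, diagonal_transpose, fromBlocks_multiply, diagonal_mul_diagonal,
    diagonal_add, ← fromBlocks_one, fromBlocks_inj] at horth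
  simp only [fromBlocks_transpose, diagonal_transpose, fromBlocks_multiply, diagonal_mul_diagonal,
    diagonal_add, diagonal_neg, fromBlocks_inj, Matrix.mul_zero, Matrix.mul_one, Matrix.mul_neg,
    zero_add, add_zero] at hsymp
  have hnorm (i : ι) : a i ^ 2 + c i ^ 2 = 1 := by
    simpa [sq] using congr_fun₂ horth.1 i i
  have hrot (i : ι) : b i = -c i ∧ d i = a i := by
    refine eq_neg_and_eq_of_sq_add_sq_eq_one_of_det_eq_one (hnorm i) ?_ ?_
    · simpa using congr_fun₂ horth.2.1 i i
    · simpa [sub_eq_neg_add] using congr_fun₂ hsymp.2.1 i i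
  choose θ hcos hsin using fun i => exists_cos_eq_and_sin_eq_of_sq_add_sq_eq_one (hnorm i)
  refine ⟨θ, ?_⟩
  simp only [hcos, hsin, funext fun i => (hrot i).1, funext fun i => (hrot i).2, diagonal_neg]

end Matrix

theorem unitary_commuting_with_distinct_diag_is_torus_general {n : ℕ}
    (d : Fin n → ℝ) (hinj : Function.Injective d)
    (U : Matrix (Fin n ⊕ Fin n) (Fin n ⊕ Fin n) ℝ)
    (horth : Uᵀ * U = 1)
    (hsymp : Uᵀ * Jmat n * U = Jmat n)
    (hM : U * Matrix.fromBlocks (Matrix.diagonal d) 0 0 (Matrix.diagonal d) * Uᵀ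
        = Matrix.fromBlocks (Matrix.diagonal d) 0 0 (Matrix.diagonal d)) :
    ∃ θ : Fin n → ℝ,
      U = Matrix.fromBlocks
        (Matrix.diagonal fun i => Real.cos (θ i))
        (-(Matrix.diagonal fun i => Real.sin (θ i)))
        (Matrix.diagonal fun i => Real.sin (θ i))
        (Matrix.diagonal fun i => Real.cos (θ i)) := by
  have hblocks := eq_fromBlocks_diagonal_of_commute hinj
    (commute_of_mul_mul_transpose_eq horth hM)
  rw [hblocks] at horth hsymp ⊢
  exact exists_angles_of_orthogonal_symplectic_fromBlocks_diagonal horth hsymp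

/-- If `U` is orthogonal, symplectic and commutes with `M = [[D,0],[0,D]]` (in the sense
`U M Uᵀ = M`) where `D` has distinct positive diagonal entries, then `U` is a block
rotation `[[C,-S],[S,C]]` with `C = diag(cos θᵢ)`, `S = diag(sin θᵢ)`. -/
theorem unitary_commuting_with_distinct_diag_is_torus {n : ℕ}
    (d : Fin n → ℝ) (hd0 : ∀ i, 0 < d i) (hinj : Function.Injective d)
    (U : Matrix (Fin n ⊕ Fin n) (Fin n ⊕ Fin n) ℝ)
    (horth : Uᵀ * U = 1)
    (hsymp : Uᵀ * Jmat n * U = Jmat n)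
    (hM : U * Matrix.fromBlocks (Matrix.diagonal d) 0 0 (Matrix.diagonal d) * Uᵀ
        = Matrix.fromBlocks (Matrix.diagonal d) 0 0 (Matrix.diagonal d)) :
    ∃ θ : Fin n → ℝ,
      U = Matrix.fromBlocks
        (Matrix.diagonal fun i => Real.cos (θ i))
        (-(Matrix.diagonal fun i => Real.sin (θ i)))
        (Matrix.diagonal fun i => Real.sin (θ i))
        (Matrix.diagonal fun i => Real.cos (θ i)) :=
  unitary_commuting_with_distinct_diag_is_torus_general d hinj U horth hsymp hM
end
end

section
/- Let D = diag(d_1,…,d_n) with d_i > 0 and v ∈ ℝ^{2n}. The determinant of the 2n×2n controllability matrix [v | Av | A²v | … | A^{2n−1}v], where A = [[0,D],[−D,0]], equals, up to sign, (∏_{i=1}^n d_i) · (∏_{1≤j<k≤n} (d_j+d_k)²(d_j−d_k)²) · (∏_{l=1}^n (v_l² + v_{n+l}²)). -/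
noncomputable section
open Matrix Polynomial

/-- The block matrix `A = [[0, D], [-D, 0]]`. -/
def AmatD {n : ℕ} (d : Fin n → ℝ) : Matrix (Fin n ⊕ Fin n) (Fin n ⊕ Fin n) ℝ :=
  Matrix.fromBlocks 0 (Matrix.diagonal d) (-(Matrix.diagonal d)) 0

/-- The controllability matrix `[v | Av | A²v | … | A^{2n-1}v]` of `(A, v)`,
with columns indexed through `finSumFinEquiv : Fin n ⊕ Fin n ≃ Fin (n + n)`. -/
def ctrlMat {n : ℕ} (d : Fin n → ℝ) (v : Fin n ⊕ Fin n → ℝ) :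
    Matrix (Fin n ⊕ Fin n) (Fin n ⊕ Fin n) ℝ :=
  Matrix.of fun i j => ((AmatD d ^ ((finSumFinEquiv j : Fin (n + n)) : ℕ)) *ᵥ v) i

open Complex Finset

namespace CtrlAux

variable {n : ℕ}

def zc (v : Fin n ⊕ Fin n → ℝ) (i : Fin n) : ℂ :=
  (v (Sum.inl i) : ℂ) + Complex.I * v (Sum.inr i)

def muc (d : Fin n → ℝ) : Fin n ⊕ Fin n → ℂ :=
  Sum.elim (fun i => -Complex.I * d i) (fun i => Complex.I * d i)

def wcz (v : Fin n ⊕ Fin n → ℝ) : Fin n ⊕ Fin n → ℂ :=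
  Sum.elim (zc v) (fun i => (starRingEnd ℂ) (zc v i))

def mup (d : Fin n → ℝ) : Fin (n + n) → ℂ := muc d ∘ finSumFinEquiv.symm

def Cc (d : Fin n → ℝ) (v : Fin n ⊕ Fin n → ℝ) :
    Matrix (Fin n ⊕ Fin n) (Fin n ⊕ Fin n) ℂ :=
  (ctrlMat d v).map (algebraMap ℝ ℂ)

def Lp (n : ℕ) : Matrix (Fin n ⊕ Fin n) (Fin n ⊕ Fin n) ℂ :=
  Matrix.fromBlocks 1 (Complex.I • 1) 1 (-Complex.I • 1)

def Wc (d : Fin n → ℝ) (v : Fin n ⊕ Fin n → ℝ) :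
    Matrix (Fin n ⊕ Fin n) (Fin n ⊕ Fin n) ℂ :=
  Matrix.of fun a j => wcz v a * muc d a ^ ((finSumFinEquiv j : Fin (n + n)) : ℕ)

lemma AmatD_mulVec (d : Fin n → ℝ) (u : Fin n ⊕ Fin n → ℝ) (i : Fin n) :
    (AmatD d *ᵥ u) (Sum.inl i) = d i * u (Sum.inr i) ∧
    (AmatD d *ᵥ u) (Sum.inr i) = -(d i * u (Sum.inl i)) := by
  constructor <;>
  simp [AmatD, fromBlocks_mulVec, mulVec_diagonal]

lemma step1 (d : Fin n → ℝ) (v : Fin n ⊕ Fin n → ℝ) (m : ℕ) (i : Fin n) :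
    ((AmatD d ^ m *ᵥ v) (Sum.inl i) : ℂ) + Complex.I * ((AmatD d ^ m *ᵥ v) (Sum.inr i)) =
      (-(Complex.I) * d i) ^ m * zc v i := by
  induction m with
  | zero => simp [zc]
  | succ m ih =>
      rw [pow_succ', ← Matrix.mulVec_mulVec,
        (AmatD_mulVec d _ i).1, (AmatD_mulVec d _ i).2]
      push_cast
      rw [pow_succ]
      rw [show ((-I * (d i:ℂ)) ^ m * (-I * (d i:ℂ)) * zc v i)
            = -I * (d i:ℂ) * ((-I * (d i:ℂ)) ^ m * zc v i) by ring, ← ih]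
      linear_combination ((d i:ℂ) * ((AmatD d ^ m *ᵥ v) (Sum.inr i) : ℂ)) * Complex.I_mul_I

lemma step1' (d : Fin n → ℝ) (v : Fin n ⊕ Fin n → ℝ) (m : ℕ) (i : Fin n) :
    ((AmatD d ^ m *ᵥ v) (Sum.inl i) : ℂ) - Complex.I * ((AmatD d ^ m *ᵥ v) (Sum.inr i)) =
      (Complex.I * d i) ^ m * (starRingEnd ℂ) (zc v i) := by
  have h := congrArg (starRingEnd ℂ) (step1 d v m i)
  simpa [map_add, _root_.map_mul, map_pow, Complex.conj_ofReal, sub_eq_add_neg] using h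

lemma Lp_mul_apply (M : Matrix (Fin n ⊕ Fin n) (Fin n ⊕ Fin n) ℂ) (i : Fin n)
    (j : Fin n ⊕ Fin n) :
    (Lp n * M) (Sum.inl i) j = M (Sum.inl i) j + Complex.I * M (Sum.inr i) j ∧
    (Lp n * M) (Sum.inr i) j = M (Sum.inl i) j - Complex.I * M (Sum.inr i) j := by
  constructor <;>
  · simp [Lp, Matrix.mul_apply, Fintype.sum_sum_type, Matrix.one_apply, ite_mul,
      sub_eq_add_neg]

lemma key_fact (d : Fin n → ℝ) (v : Fin n ⊕ Fin n → ℝ) : Lp n * Cc d v = Wc d v := by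
  ext a j
  have hC : ∀ b, Cc d v b j
      = ((AmatD d ^ ((finSumFinEquiv j : Fin (n + n)) : ℕ) *ᵥ v) b : ℂ) := by
    intro b; simp [Cc, ctrlMat, Matrix.map_apply]
  rcases a with i | i
  · rw [(Lp_mul_apply (Cc d v) i j).1, hC, hC]
    rw [step1 d v _ i]
    simp [Wc, wcz, muc, mul_comm]
  · rw [(Lp_mul_apply (Cc d v) i j).2, hC, hC]
    rw [step1' d v _ i]
    simp [Wc, wcz, muc, mul_comm]

lemma detLp : (Lp n).det = (-(2 * Complex.I)) ^ n := by
  have h1 : (-Complex.I • (1 : Matrix (Fin n) (Fin n) ℂ))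
      - 1 * (Complex.I • 1) = (-(2 * Complex.I)) • 1 := by
    rw [Matrix.one_mul, ← sub_smul]; congr 1; ring
  rw [Lp, Matrix.det_fromBlocks_one₁₁, h1, Matrix.det_smul, Matrix.det_one,
    Fintype.card_fin, mul_one]

lemma detWc (d : Fin n → ℝ) (v : Fin n ⊕ Fin n → ℝ) :
    (Wc d v).det = (∏ a, wcz v a) *
      ∏ i : Fin (n + n), ∏ j ∈ Finset.Ioi i, (mup d j - mup d i) := by
  have h : Wc d v = Matrix.diagonal (wcz v) *
      ((Matrix.vandermonde (mup d)).submatrix finSumFinEquiv finSumFinEquiv) := by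
    ext a j
    simp [Wc, Matrix.diagonal_mul, Matrix.vandermonde, mup, Matrix.submatrix_apply]
  rw [h, Matrix.det_mul, Matrix.det_diagonal, Matrix.det_submatrix_equiv_self,
    Matrix.det_vandermonde]

lemma prod_compl_eq {M : Type*} [CommMonoid M] {α : Type*} [Fintype α] [DecidableEq α]
    (g : α → M) (i : α) :
    ∏ j ∈ ({i}ᶜ : Finset α), g j = ∏ j, if j = i then 1 else g j := by
  have h := Finset.prod_compl_mul_prod ({i} : Finset α) (fun j => if j = i then 1 else g j)
  rw [Finset.prod_singleton, if_pos rfl, mul_one] at h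
  rw [← h]
  refine Finset.prod_congr rfl fun j hj => ?_
  rw [Finset.mem_compl, Finset.mem_singleton] at hj
  rw [if_neg hj]

lemma prod_erase_eq {M : Type*} [CommMonoid M] {α : Type*} [Fintype α] [DecidableEq α]
    (g : α → M) (i : α) :
    ∏ j ∈ Finset.univ.erase i, g j = ∏ j, if j = i then 1 else g j := by
  have h := Finset.mul_prod_erase Finset.univ (fun j => if j = i then 1 else g j)
    (Finset.mem_univ i)
  beta_reduce at h
  rw [if_pos rfl, one_mul] at h
  rw [← h]
  exact Finset.prod_congr rfl fun j hj => (if_neg (Finset.ne_of_mem_erase hj)).symm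

lemma offdiag_helper {M : Type*} [CommMonoid M] {α : Type*} [Fintype α] [DecidableEq α]
    [LinearOrder α] [LocallyFiniteOrderTop α] [LocallyFiniteOrderBot α] (f : α → α → M) :
    ∏ i, ∏ j ∈ Finset.Ioi i, f j i * f i j = ∏ i, ∏ j, if j = i then 1 else f j i := by
  rw [Finset.prod_prod_Ioi_mul_eq_prod_prod_off_diag]
  refine Finset.prod_congr rfl fun i _ => ?_
  have h := prod_compl_eq (fun j => f j i) i
  beta_reduce at h
  rw [← h]
  apply Finset.prod_congr _ fun j _ => rfl
  ext j
  simp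

lemma pv_sq (d : Fin n → ℝ) :
    (∏ i : Fin (n + n), ∏ j ∈ Finset.Ioi i, (mup d j - mup d i)) ^ 2
      = (Complex.I ^ ((n + n) - 1)) ^ (n + n) *
        ∏ a : Fin n ⊕ Fin n, ∏ b : Fin n ⊕ Fin n,
          (if b = a then 1 else (muc d b - muc d a)) := by
  rw [← Finset.prod_pow]
  have h1 : ∀ i : Fin (n + n), (∏ j ∈ Finset.Ioi i, (mup d j - mup d i)) ^ 2
      = ∏ j ∈ Finset.Ioi i,
          (Complex.I * (mup d j - mup d i)) * (Complex.I * (mup d i - mup d j)) := by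
    intro i
    rw [← Finset.prod_pow]
    refine Finset.prod_congr rfl fun j _ => ?_
    linear_combination ((mup d j - mup d i)^2) * Complex.I_mul_I
  simp_rw [h1]
  rw [offdiag_helper (f := fun a b => Complex.I * (mup d a - mup d b))]
  have h5 : ∀ i : Fin (n + n),
      (∏ j : Fin (n + n), if j = i then (1:ℂ) else Complex.I * (mup d j - mup d i))
      = Complex.I ^ ((n + n) - 1)
        * ∏ j : Fin (n + n), if j = i then 1 else (mup d j - mup d i) := by
    intro i
    have hsplit : ∀ j : Fin (n + n),
        (if j = i then (1:ℂ) else Complex.I * (mup d j - mup d i))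
        = (if j = i then (1:ℂ) else Complex.I)
          * (if j = i then 1 else (mup d j - mup d i)) := by
      intro j; by_cases h : j = i <;> simp [h]
    simp_rw [hsplit]
    rw [Finset.prod_mul_distrib, ← prod_compl_eq (fun _ => Complex.I) i,
      Finset.prod_const, Finset.card_compl, Finset.card_singleton, Fintype.card_fin]
  simp_rw [h5]
  rw [Finset.prod_mul_distrib, Finset.prod_const, Finset.card_univ, Fintype.card_fin]
  congr 1
  refine (Fintype.prod_equiv finSumFinEquiv _ _ fun a => ?_).symm
  refine Fintype.prod_equiv finSumFinEquiv _ _ fun b => ?_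
  by_cases h : b = a
  · simp [h]
  · rw [if_neg h, if_neg (by simpa using h)]
    simp [mup]

lemma T_eval (d : Fin n → ℝ) :
    (∏ a : Fin n ⊕ Fin n, ∏ b : Fin n ⊕ Fin n,
        if b = a then 1 else (muc d b - muc d a))
    = (∏ i : Fin n, ∏ j : Fin n, if j = i then (1 : ℂ) else ((d i : ℂ) - d j) ^ 2)
      * ∏ i : Fin n, ∏ j : Fin n, ((d j : ℂ) + d i) ^ 2 := by
  rw [Fintype.prod_sum_type]
  have hin : ∀ i : Fin n, (∏ b : Fin n ⊕ Fin n,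
      if b = Sum.inl i then 1 else (muc d b - muc d (Sum.inl i)))
      = (∏ j : Fin n, if j = i then (1:ℂ) else (-Complex.I * d j - -Complex.I * d i))
        * ∏ j : Fin n, (Complex.I * d j - -Complex.I * d i) := by
    intro i
    rw [Fintype.prod_sum_type]
    refine congrArg₂ (· * ·) (Finset.prod_congr rfl fun j _ => ?_)
      (Finset.prod_congr rfl fun j _ => ?_)
    · by_cases h : j = i
      · simp [h]
      · rw [if_neg (by simpa using h), if_neg h]; simp [muc]
    · rw [if_neg (by simp)]; simp [muc]
  have hir : ∀ i : Fin n, (∏ b : Fin n ⊕ Fin n,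
      if b = Sum.inr i then 1 else (muc d b - muc d (Sum.inr i)))
      = (∏ j : Fin n, (-Complex.I * d j - Complex.I * d i))
        * ∏ j : Fin n, if j = i then (1:ℂ) else (Complex.I * d j - Complex.I * d i) := by
    intro i
    rw [Fintype.prod_sum_type]
    refine congrArg₂ (· * ·) (Finset.prod_congr rfl fun j _ => ?_)
      (Finset.prod_congr rfl fun j _ => ?_)
    · rw [if_neg (by simp)]; simp [muc]
    · by_cases h : j = i
      · simp [h]
      · rw [if_neg (by simpa using h), if_neg h]; simp [muc]
  simp_rw [hin, hir]
  rw [← Finset.prod_mul_distrib, ← Finset.prod_mul_distrib]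
  refine Finset.prod_congr rfl fun i _ => ?_
  have h14 : (∏ j : Fin n, if j = i then (1:ℂ) else (-Complex.I * d j - -Complex.I * d i))
      * (∏ j : Fin n, if j = i then (1:ℂ) else (Complex.I * d j - Complex.I * d i))
      = ∏ j : Fin n, if j = i then (1:ℂ) else ((d i : ℂ) - d j) ^ 2 := by
    rw [← Finset.prod_mul_distrib]
    refine Finset.prod_congr rfl fun j _ => ?_
    by_cases h : j = i
    · simp [h]
    · rw [if_neg h, if_neg h, if_neg h]
      linear_combination (-(((d i:ℂ) - d j)^2)) * Complex.I_mul_I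
  have h23 : (∏ j : Fin n, (Complex.I * d j - -Complex.I * d i))
      * (∏ j : Fin n, (-Complex.I * d j - Complex.I * d i))
      = ∏ j : Fin n, ((d j : ℂ) + d i) ^ 2 := by
    rw [← Finset.prod_mul_distrib]
    refine Finset.prod_congr rfl fun j _ => ?_
    linear_combination (-(((d j:ℂ) + d i)^2)) * Complex.I_mul_I
  rw [← h14, ← h23]
  ring

lemma E1_eval (d : Fin n → ℝ) :
    (∏ i : Fin n, ∏ j : Fin n, if j = i then (1 : ℂ) else ((d i : ℂ) - d j) ^ 2)
    = ∏ i : Fin n, ∏ j ∈ Finset.Ioi i, ((d i : ℂ) - d j) ^ 2 * ((d j : ℂ) - d i) ^ 2 := by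
  exact (offdiag_helper fun a b => ((d b : ℂ) - d a) ^ 2).symm

lemma E2_eval (d : Fin n → ℝ) :
    (∏ i : Fin n, ∏ j : Fin n, ((d j : ℂ) + d i) ^ 2)
    = (∏ i : Fin n, (2 * (d i : ℂ)) ^ 2) *
        ∏ i : Fin n, ∏ j ∈ Finset.Ioi i, ((d j : ℂ) + d i) ^ 2 * ((d i : ℂ) + d j) ^ 2 := by
  have h1 : ∀ i : Fin n, (∏ j : Fin n, ((d j : ℂ) + d i) ^ 2)
      = (2 * (d i : ℂ)) ^ 2
        * ∏ j : Fin n, if j = i then 1 else ((d j : ℂ) + d i) ^ 2 := by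
    intro i
    rw [← prod_erase_eq (fun j => ((d j : ℂ) + d i) ^ 2) i,
      ← Finset.mul_prod_erase Finset.univ _ (Finset.mem_univ i),
      show ((d i : ℂ) + d i) ^ 2 = (2 * (d i : ℂ)) ^ 2 from by ring]
  simp_rw [h1]
  rw [Finset.prod_mul_distrib]
  congr 1
  exact (offdiag_helper fun a b => ((d a : ℂ) + d b) ^ 2).symm

lemma phase_eval (n : ℕ) : ((Complex.I ^ ((n + n) - 1)) ^ (n + n) : ℂ) = (-1) ^ n := by
  rw [← pow_mul]
  have h : ((n + n) - 1) * (n + n) = 2 * (((n + n) - 1) * n) := by ring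
  rw [h, pow_mul, Complex.I_sq]
  rcases Nat.even_or_odd n with he | ho
  · rw [(he.mul_left _).neg_one_pow, he.neg_one_pow]
  · obtain ⟨k, hk⟩ := ho
    have h1 : Odd ((n + n) - 1) := ⟨n - 1, by omega⟩
    rw [(h1.mul ⟨k, hk⟩).neg_one_pow, Odd.neg_one_pow ⟨k, hk⟩]

end CtrlAux

open CtrlAux in
/-- The determinant of the controllability matrix equals, up to sign,
`(∏ dᵢ) · (∏_{j<k} (dⱼ+dₖ)²(dⱼ-dₖ)²) · (∏ (vₗ² + v_{n+l}²))`. -/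
theorem det_ctrlMat {n : ℕ} (d : Fin n → ℝ) (hd : ∀ i, 0 < d i)
    (v : Fin n ⊕ Fin n → ℝ) :
    (ctrlMat d v).det =
        (∏ i : Fin n, d i) *
          (∏ j : Fin n, ∏ k ∈ Finset.Ioi j, (d j + d k) ^ 2 * (d j - d k) ^ 2) *
          (∏ l : Fin n, (v (Sum.inl l) ^ 2 + v (Sum.inr l) ^ 2)) ∨
      (ctrlMat d v).det =
        -((∏ i : Fin n, d i) *
          (∏ j : Fin n, ∏ k ∈ Finset.Ioi j, (d j + d k) ^ 2 * (d j - d k) ^ 2) *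
          (∏ l : Fin n, (v (Sum.inl l) ^ 2 + v (Sum.inr l) ^ 2))) := by
  -- abbreviations over ℂ
  set X : ℝ := (∏ i : Fin n, d i) *
      (∏ j : Fin n, ∏ k ∈ Finset.Ioi j, (d j + d k) ^ 2 * (d j - d k) ^ 2) *
      (∏ l : Fin n, (v (Sum.inl l) ^ 2 + v (Sum.inr l) ^ 2)) with hX
  rw [← sq_eq_sq_iff_eq_or_eq_neg]
  have hinj : Function.Injective (algebraMap ℝ ℂ) := Complex.ofReal_injective
  apply hinj
  rw [map_pow, map_pow, RingHom.map_det]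
  -- now a statement purely over ℂ
  show (Cc d v).det ^ 2 = (algebraMap ℝ ℂ) X ^ 2
  have hdet : (-(2 * Complex.I)) ^ n * (Cc d v).det
      = (∏ a, wcz v a) * ∏ i : Fin (n + n), ∏ j ∈ Finset.Ioi i, (mup d j - mup d i) := by
    rw [← detLp, ← Matrix.det_mul, key_fact, detWc]
  -- product of w's
  have hw : (∏ a, wcz v a)
      = ∏ l : Fin n, (((v (Sum.inl l) : ℂ)) ^ 2 + ((v (Sum.inr l) : ℂ)) ^ 2) := by
    rw [Fintype.prod_sum_type, ← Finset.prod_mul_distrib]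
    refine Finset.prod_congr rfl fun l _ => ?_
    simp only [wcz, Sum.elim_inl, Sum.elim_inr, zc, map_add, _root_.map_mul, Complex.conj_ofReal,
      Complex.conj_I]
    linear_combination (-((v (Sum.inr l) : ℂ))^2) * Complex.I_mul_I
  have e1 : ((-(2 * Complex.I)) ^ n) ^ 2 = (-4 : ℂ) ^ n := by
    rw [← pow_mul, mul_comm n 2, pow_mul,
      show (-(2 * Complex.I)) ^ 2 = (-4 : ℂ) from by
        linear_combination (4 : ℂ) * Complex.I_mul_I]
  have hstep : (-4 : ℂ) ^ n * (Cc d v).det ^ 2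
      = (∏ a, wcz v a) ^ 2
        * (∏ i : Fin (n + n), ∏ j ∈ Finset.Ioi i, (mup d j - mup d i)) ^ 2 := by
    rw [← e1, ← mul_pow, hdet, mul_pow]
  rw [hw, pv_sq, phase_eval, T_eval, E1_eval, E2_eval] at hstep
  have hB : (∏ i : Fin n, (2 * (d i : ℂ)) ^ 2) = (4 : ℂ) ^ n * (∏ i : Fin n, (d i : ℂ)) ^ 2 := by
    simp_rw [mul_pow]
    rw [Finset.prod_mul_distrib, Finset.prod_const, Finset.prod_pow, Finset.card_univ,
      Fintype.card_fin]
    norm_num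
  rw [hB] at hstep
  have hAC : (∏ i : Fin n, ∏ j ∈ Finset.Ioi i, ((d i : ℂ) - d j) ^ 2 * ((d j : ℂ) - d i) ^ 2)
      * (∏ i : Fin n, ∏ j ∈ Finset.Ioi i, ((d j : ℂ) + d i) ^ 2 * ((d i : ℂ) + d j) ^ 2)
      = (∏ i : Fin n, ∏ j ∈ Finset.Ioi i, ((d i : ℂ) + d j) ^ 2 * ((d i : ℂ) - d j) ^ 2) ^ 2 := by
    rw [← Finset.prod_mul_distrib, ← Finset.prod_pow]
    refine Finset.prod_congr rfl fun i _ => ?_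
    rw [← Finset.prod_mul_distrib, ← Finset.prod_pow]
    refine Finset.prod_congr rfl fun j _ => ?_
    ring
  have hX2 : (algebraMap ℝ ℂ) X
      = (∏ i : Fin n, (d i : ℂ))
        * (∏ i : Fin n, ∏ j ∈ Finset.Ioi i, ((d i : ℂ) + d j) ^ 2 * ((d i : ℂ) - d j) ^ 2)
        * (∏ l : Fin n, ((v (Sum.inl l) : ℂ) ^ 2 + (v (Sum.inr l) : ℂ) ^ 2)) := by
    rw [Complex.coe_algebraMap, hX]
    push_cast
    ring
  have h4 : ((-4 : ℂ) ^ n) ≠ 0 := pow_ne_zero _ (by norm_num)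
  rw [hX2]
  apply mul_left_cancel₀ h4
  rw [hstep]
  linear_combination ((-1 : ℂ) ^ n * 4 ^ n * (∏ i : Fin n, (d i : ℂ)) ^ 2
      * (∏ l : Fin n, ((v (Sum.inl l) : ℂ) ^ 2 + (v (Sum.inr l) : ℂ) ^ 2)) ^ 2) * hAC
    - ((∏ l : Fin n, ((v (Sum.inl l) : ℂ) ^ 2 + (v (Sum.inr l) : ℂ) ^ 2)) ^ 2
        * (∏ i : Fin n, (d i : ℂ)) ^ 2
        * (∏ i : Fin n, ∏ j ∈ Finset.Ioi i, ((d i : ℂ) + d j) ^ 2 * ((d i : ℂ) - d j) ^ 2) ^ 2)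
      * (neg_pow (4 : ℂ) n)
end
end

section
/- Let D = diag(d_1,…,d_n) with d_i > 0 and v ∈ ℝ^{2n}, and A = [[0,D],[−D,0]]. The pair (A, v) is controllable (i.e., [v | Av | … | A^{2n−1}v] is invertible) if and only if the d_i are pairwise distinct and v_l² + v_{n+l}² > 0 for every l = 1,…,n. -/
/-!
Over `ℂ` the matrix `A` is diagonalised by the rows `e_l ∓ i e_{n+l}`, with eigenvalues `± i d_l`.
If `P` is the matrix of these rows, `P A^k v` has entries `(± i d_l)^k (v_l ∓ i v_{n+l})`, so
`P [v | Av | … | A^{2n-1}v] = diag(P v) · V` with `V` the Vandermonde matrix of the eigenvalues.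
Hence the controllability matrix is invertible iff the `2n` numbers `± i d_l` are distinct, which
for positive `d_l` means that the `d_l` are distinct, and no `v_l ∓ i v_{n+l}` vanishes.
-/

noncomputable section
open Matrix Polynomial

open Complex

theorem Matrix.isUnit_map_iff {ι K L : Type*} [Fintype ι] [DecidableEq ι] [Field K] [CommRing L]
    [Nontrivial L] (f : K →+* L) (M : Matrix ι ι K) : IsUnit (M.map f) ↔ IsUnit M := by
  rw [isUnit_iff_isUnit_det, isUnit_iff_isUnit_det, ← RingHom.mapMatrix_apply, ← RingHom.map_det,
    _root_.isUnit_map_iff]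

section Krylov

variable {ι R S K : Type*} [Fintype ι] [DecidableEq ι] {m : ℕ}

def krylovMatrix [Semiring R] (e : ι ≃ Fin m) (A : Matrix ι ι R) (v : ι → R) : Matrix ι ι R :=
  of fun i j => (A ^ (e j : ℕ) *ᵥ v) i

theorem krylovMatrix_map [Semiring R] [Semiring S] (f : R →+* S) (e : ι ≃ Fin m)
    (A : Matrix ι ι R) (v : ι → R) :
    (krylovMatrix e A v).map f = krylovMatrix e (A.map f) (f ∘ v) := by
  ext i j
  simp only [krylovMatrix, map_apply, of_apply, RingHom.map_mulVec, Matrix.map_pow]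

theorem mul_krylovMatrix_of_semiconjBy [CommRing R] {P A : Matrix ι ι R} {μ : ι → R}
    (h : SemiconjBy P A (diagonal μ)) (e : ι ≃ Fin m) (v : ι → R) :
    P * krylovMatrix e A v = diagonal (P *ᵥ v) * (vandermonde (μ ∘ e.symm)).submatrix e e := by
  ext i j
  have hP : P * A ^ (e j : ℕ) = diagonal (μ ^ (e j : ℕ)) * P := by
    rw [← diagonal_pow]; exact (h.pow_right _).eq
  calc (P * krylovMatrix e A v) i j = ((P * A ^ (e j : ℕ)) *ᵥ v) i := by
        rw [← mulVec_mulVec]; rfl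
    _ = μ i ^ (e j : ℕ) * (P *ᵥ v) i := by
        rw [hP, ← mulVec_mulVec, mulVec_diagonal, Pi.pow_apply]
    _ = _ := by
        simp [diagonal_mul, vandermonde_apply, mul_comm]

theorem isUnit_krylovMatrix_iff [Field K] {P A : Matrix ι ι K} {μ : ι → K} (hP : IsUnit P)
    (h : SemiconjBy P A (diagonal μ)) (e : ι ≃ Fin m) (v : ι → K) :
    IsUnit (krylovMatrix e A v) ↔ Function.Injective μ ∧ ∀ i, (P *ᵥ v) i ≠ 0 := by
  have hdet := congrArg det (mul_krylovMatrix_of_semiconjBy h e v)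
  rw [det_mul, det_mul, det_diagonal, det_submatrix_equiv_self] at hdet
  have hPdet : P.det ≠ 0 := ((isUnit_iff_isUnit_det P).mp hP).ne_zero
  rw [isUnit_iff_isUnit_det, isUnit_iff_ne_zero, ← mul_ne_zero_iff_left hPdet, hdet,
    mul_ne_zero_iff, Finset.prod_ne_zero_iff, det_vandermonde_ne_zero_iff,
    Equiv.injective_comp, and_comm]
  simp only [Finset.mem_univ, true_implies]

end Krylov

section Eigenbasis

variable {n : ℕ}

/-- Its rows `e_l ∓ i e_{n+l}` are left eigenvectors of every `AmatD d`, with eigenvalues `± i d_l`. -/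
def leftEigenMatrix (n : ℕ) : Matrix (Fin n ⊕ Fin n) (Fin n ⊕ Fin n) ℂ :=
  fromBlocks 1 (-I • 1) 1 (I • 1)

def amatDEigenvalues (d : Fin n → ℝ) : Fin n ⊕ Fin n → ℂ :=
  Sum.elim (fun l => I * d l) (fun l => -(I * d l))

theorem semiconjBy_leftEigenMatrix (d : Fin n → ℝ) :
    SemiconjBy (leftEigenMatrix n) ((AmatD d).map ofReal) (diagonal (amatDEigenvalues d)) := by
  rw [SemiconjBy, AmatD, leftEigenMatrix, amatDEigenvalues, ← fromBlocks_diagonal, fromBlocks_map,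
    fromBlocks_multiply, fromBlocks_multiply]
  simp only [diagonal_map ofReal_zero, Matrix.map_zero _ ofReal_zero]
  congr 1 <;> ext a b <;> by_cases hab : a = b <;> simp [hab, diagonal, ← mul_assoc]

theorem isUnit_leftEigenMatrix (n : ℕ) : IsUnit (leftEigenMatrix n) := by
  rw [isUnit_iff_isUnit_det, isUnit_iff_ne_zero, leftEigenMatrix, det_fromBlocks_one₁₁, one_mul,
    neg_smul, sub_neg_eq_add, ← add_smul, det_smul, det_one]
  simp [I_ne_zero]

theorem leftEigenMatrix_mulVec (v : Fin n ⊕ Fin n → ℝ) :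
    leftEigenMatrix n *ᵥ (ofReal ∘ v) =
      Sum.elim (fun l => v (.inl l) + ↑(-v (.inr l)) * I) (fun l => v (.inl l) + v (.inr l) * I) := by
  ext (l | l) <;> simp [leftEigenMatrix, fromBlocks_mulVec, neg_mulVec, smul_mulVec, mul_comm]

theorem ofReal_add_ofReal_mul_I_ne_zero_iff (x y : ℝ) : (x + y * I : ℂ) ≠ 0 ↔ 0 < x ^ 2 + y ^ 2 := by
  rw [← normSq_pos, normSq_add_mul_I]

theorem amatDEigenvalues_injective_iff {d : Fin n → ℝ} (hd : ∀ i, 0 < d i) :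
    Function.Injective (amatDEigenvalues d) ↔ Function.Injective d := by
  have hsep : ∀ a b, I * d a ≠ -(I * d b) := fun a b h => by
    have : ((d a + d b : ℝ) : ℂ) = 0 := by
      push_cast
      linear_combination -I * h + (d a + d b : ℂ) * I_sq
    exact (add_pos (hd a) (hd b)).ne' (ofReal_eq_zero.mp this)
  have hinl : Function.Injective (fun l => I * d l) ↔ Function.Injective d :=
    ((mul_right_injective₀ I_ne_zero).comp ofReal_injective).of_comp_iff d
  have hinr : Function.Injective (fun l => -(I * d l)) ↔ Function.Injective d :=
    ((neg_injective.comp (mul_right_injective₀ I_ne_zero)).comp ofReal_injective).of_comp_iff d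
  rw [amatDEigenvalues, Sum.elim_injective, hinl, hinr]
  exact ⟨fun h => h.1, fun h => ⟨h, h, hsep⟩⟩

end Eigenbasis

/-- `(A, v)` is controllable iff the `dᵢ` are pairwise distinct and
`vₗ² + v_{n+l}² > 0` for every `l`. -/
theorem ctrlMat_isUnit_iff {n : ℕ} (d : Fin n → ℝ) (hd : ∀ i, 0 < d i)
    (v : Fin n ⊕ Fin n → ℝ) :
    IsUnit (ctrlMat d v) ↔
      Function.Injective d ∧ ∀ l : Fin n, 0 < v (Sum.inl l) ^ 2 + v (Sum.inr l) ^ 2 := by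
  have hctrl : ctrlMat d v = krylovMatrix finSumFinEquiv (AmatD d) v := rfl
  have hkrylov := isUnit_krylovMatrix_iff (isUnit_leftEigenMatrix n)
    (semiconjBy_leftEigenMatrix d) finSumFinEquiv (ofReal ∘ v)
  rw [← Matrix.isUnit_map_iff ofRealHom, hctrl, krylovMatrix_map]
  refine hkrylov.trans ?_
  simp only [amatDEigenvalues_injective_iff hd, leftEigenMatrix_mulVec, Sum.forall, Sum.elim_inl,
    Sum.elim_inr, ofReal_add_ofReal_mul_I_ne_zero_iff, neg_sq, and_self]
end
end

section
/- Let G be the set of pairs (L,(Q,B)) with L ∈ GL(2n,ℝ), Q symmetric positive definite, B ∈ ℝ^{2n}, satisfying (i) Jᵀ L J Q L^{−1} is symmetric positive definite and (ii) B = Jᵀ Lᵀ J L B. Then G is closed under the multiplication m((L_1,(Q_1,B_1)),(L_2,(Q_2,B_2))) = (L_1 L_2,(Q_2,B_2)) whenever (Q_1,B_1) = (Jᵀ L_2 J Q_2 L_2^{−1}, L_2 B_2); that is, if (L_1,(Q_1,B_1)) and (L_2,(Q_2,B_2)) belong to G and are composable, then (L_1 L_2,(Q_2,B_2)) also belongs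 to G. -/
noncomputable section
open Matrix Polynomial

lemma Jmat_mul_transpose (n : ℕ) : Jmat n * (Jmat n)ᵀ = 1 := by
  simp [Jmat, Matrix.fromBlocks_transpose, Matrix.fromBlocks_multiply,
    ← Matrix.fromBlocks_one]

lemma Jmat_cancel {n : ℕ} (X : Matrix (Fin n ⊕ Fin n) (Fin n ⊕ Fin n) ℝ) :
    Jmat n * ((Jmat n)ᵀ * X) = X := by
  rw [← Matrix.mul_assoc, Jmat_mul_transpose, Matrix.one_mul]

/-- Closure of the port-Hamiltonian groupoid under multiplication: if
`(L₁,(Q₁,B₁))` and `(L₂,(Q₂,B₂))` satisfy the groupoid membership conditions and are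
composable (`(Q₁,B₁) = (Jᵀ L₂ J Q₂ L₂⁻¹, L₂ B₂)`), then `(L₁ L₂, (Q₂,B₂))` also
satisfies the membership conditions. -/
theorem groupoid_mul_mem {n : ℕ}
    (L₁ L₂ Q₁ Q₂ : Matrix (Fin n ⊕ Fin n) (Fin n ⊕ Fin n) ℝ)
    (B₁ B₂ : Fin n ⊕ Fin n → ℝ)
    (hL₁ : IsUnit L₁) (hL₂ : IsUnit L₂)
    (hQ₁s : Q₁.IsSymm) (hQ₁p : Q₁.PosDef)
    (hQ₂s : Q₂.IsSymm) (hQ₂p : Q₂.PosDef)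
    (h₁s : ((Jmat n)ᵀ * L₁ * Jmat n * Q₁ * L₁⁻¹).IsSymm)
    (h₁p : ((Jmat n)ᵀ * L₁ * Jmat n * Q₁ * L₁⁻¹).PosDef)
    (h₁B : B₁ = ((Jmat n)ᵀ * L₁ᵀ * Jmat n * L₁) *ᵥ B₁)
    (h₂s : ((Jmat n)ᵀ * L₂ * Jmat n * Q₂ * L₂⁻¹).IsSymm)
    (h₂p : ((Jmat n)ᵀ * L₂ * Jmat n * Q₂ * L₂⁻¹).PosDef)
    (h₂B : B₂ = ((Jmat n)ᵀ * L₂ᵀ * Jmat n * L₂) *ᵥ B₂)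
    (hcompQ : Q₁ = (Jmat n)ᵀ * L₂ * Jmat n * Q₂ * L₂⁻¹)
    (hcompB : B₁ = L₂ *ᵥ B₂) :
    ((Jmat n)ᵀ * (L₁ * L₂) * Jmat n * Q₂ * (L₁ * L₂)⁻¹).IsSymm ∧
      ((Jmat n)ᵀ * (L₁ * L₂) * Jmat n * Q₂ * (L₁ * L₂)⁻¹).PosDef ∧
      B₂ = ((Jmat n)ᵀ * (L₁ * L₂)ᵀ * Jmat n * (L₁ * L₂)) *ᵥ B₂ := by
  have hkey : (Jmat n)ᵀ * (L₁ * L₂) * Jmat n * Q₂ * (L₁ * L₂)⁻¹ =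
      (Jmat n)ᵀ * L₁ * Jmat n * Q₁ * L₁⁻¹ := by
    rw [hcompQ, Matrix.mul_inv_rev]
    simp only [Matrix.mul_assoc, Jmat_cancel]
  have hBkey : (Jmat n)ᵀ * (L₁ * L₂)ᵀ * Jmat n * (L₁ * L₂) =
      ((Jmat n)ᵀ * L₂ᵀ * Jmat n) * ((Jmat n)ᵀ * L₁ᵀ * Jmat n * L₁) * L₂ := by
    rw [Matrix.transpose_mul]
    simp only [Matrix.mul_assoc, Jmat_cancel]
  refine ⟨?_, ?_, ?_⟩
  · rw [hkey]; exact h₁s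
  · rw [hkey]; exact h₁p
  rw [hBkey, ← Matrix.mulVec_mulVec, ← Matrix.mulVec_mulVec, ← hcompB, ← h₁B, hcompB,
    Matrix.mulVec_mulVec, ← h₂B]
end
end

section
/- Two controllable Hamiltonian representations θ(d_1,v_1) and θ(d_2,v_2) (companion-form systems with state matrix g_1(d), input vector e_{2n}, and output row g_2(d,v)) are system isomorphic if and only if g_1(d_1) = g_1(d_2) and g_2(d_1,v_1) = g_2(d_2,v_2); equivalently, the multiset {d_{1,i}} equals {d_{2,i}} and the quadratic invariants c_{2k+1}(d_1,v_1) = c_{2k+1}(d_2,v_2) for all k = 0,…,n−1. -/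
noncomputable section
open Matrix Polynomial

/-- Coefficients of `∏_j (λ² + d_j²)`. -/
def coeffA {n : ℕ} (d : Fin n → ℝ) (i : ℕ) : ℝ :=
  (∏ j : Fin n, ((X : ℝ[X]) ^ 2 + C (d j ^ 2))).coeff i

/-- The companion-form state matrix `g₁(d)` of `∏_j (λ² + d_j²)`. -/
def g1 {n : ℕ} (d : Fin n → ℝ) : Matrix (Fin (2 * n)) (Fin (2 * n)) ℝ :=
  Matrix.of fun i j =>
    if (i : ℕ) = 2 * n - 1 then -coeffA d j
    else if (j : ℕ) = (i : ℕ) + 1 then 1 else 0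

/-- The quadratic invariant `c_{2k+1}(d,v) = vᵀ [[F_k,0],[0,F_k]] v`. -/
def cInv {n : ℕ} (d : Fin n → ℝ) (v : Fin n ⊕ Fin n → ℝ) (k : ℕ) : ℝ :=
  v ⬝ᵥ (Matrix.fromBlocks (Fmat d k) 0 0 (Fmat d k) *ᵥ v)

/-- The output row `g₂(d,v) = [0, c_{2n-1}, 0, c_{2n-3}, …, 0, c_1]`. -/
def g2 {n : ℕ} (d : Fin n → ℝ) (v : Fin n ⊕ Fin n → ℝ) : Fin (2 * n) → ℝ :=
  fun j => if (j : ℕ) % 2 = 1 then cInv d v (n - 1 - (j : ℕ) / 2) else 0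

/-- The last standard basis vector `e_{2n}`. -/
def eLast (n : ℕ) : Fin (2 * n) → ℝ := fun i => if (i : ℕ) = 2 * n - 1 then 1 else 0

/-! The state matrix `g₁(d)` is the companion matrix `A` of `p = ∏ⱼ (λ² + dⱼ²)`, and `e = e_{2n}`
is a cyclic vector for it: the Krylov matrix `[e, Ae, …, A^{2n-1}e]` is anti-triangular with
ones on the antidiagonal. An isomorphism `L` sends `A₁ᵏe` to `A₂ᵏe`; applying it to the
Cayley–Hamilton relation `A₁^{2n}e = -Σₖ aₖ A₁ᵏe` shows that the coefficients of `A₁` and `A₂`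
agree, so `A₁ = A₂`, and then `L` fixes the Krylov basis, i.e. `L = 1`. Finally `p`
determines the multiset of the `dⱼ²`, hence of the positive `dⱼ`, and `g₂` lists exactly the
invariants `c_{2k+1}`. -/

section Companion

variable {R : Type*} [CommRing R] {m : ℕ}

def companion (a : Fin m → R) : Matrix (Fin m) (Fin m) R :=
  Matrix.of fun i j => if (i : ℕ) = m - 1 then -a j else if (j : ℕ) = i + 1 then 1 else 0

def lastVec (m : ℕ) : Fin m → R := fun i => if (i : ℕ) = m - 1 then 1 else 0

def krylov (A : Matrix (Fin m) (Fin m) R) (v : Fin m → R) : Matrix (Fin m) (Fin m) R :=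
  Matrix.of fun i k => (A ^ (k : ℕ) *ᵥ v) i

theorem companion_injective : Function.Injective (companion : (Fin m → R) → _) := by
  intro a b h
  funext j
  have := j.isLt
  simpa [companion] using congrFun (congrFun h ⟨m - 1, by omega⟩) j

theorem companion_mulVec_apply_of_lt (a : Fin m → R) (v : Fin m → R) {i : Fin m}
    (hi : (i : ℕ) + 1 < m) : (companion a *ᵥ v) i = v ⟨i + 1, hi⟩ := by
  simp only [mulVec, dotProduct, companion, of_apply, if_neg (show (i : ℕ) ≠ m - 1 by omega),
    ite_mul, one_mul, zero_mul]
  simp only [← Fin.ext_iff (b := ⟨i + 1, hi⟩), Finset.sum_ite_eq', Finset.mem_univ, if_true]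

theorem companion_mulVec_apply_last (a : Fin m → R) (v : Fin m → R) {i : Fin m}
    (hi : (i : ℕ) = m - 1) : (companion a *ᵥ v) i = -(a ⬝ᵥ v) := by
  simp [mulVec, dotProduct, companion, hi]

theorem companion_pow_add_mulVec_apply (a : Fin m → R) (v : Fin m → R) (k : ℕ) {i j : ℕ}
    (h : i + j < m) :
    (companion a ^ (k + j) *ᵥ v) ⟨i, by omega⟩ = (companion a ^ k *ᵥ v) ⟨i + j, h⟩ := by
  induction j generalizing i with
  | zero => rfl
  | succ j ih =>
    rw [← add_assoc, pow_succ', ← mulVec_mulVec, companion_mulVec_apply_of_lt a _ (by simp; omega)]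
    simpa [add_assoc, add_comm 1 j] using ih (i := i + 1) (by omega)

theorem companion_pow_mulVec_symm (a : Fin m → R) (v : Fin m → R) (i k : Fin m) :
    (companion a ^ (k : ℕ) *ᵥ v) i = (companion a ^ (i : ℕ) *ᵥ v) k := by
  wlog hki : (k : ℕ) ≤ i generalizing i k
  · exact (this k i (by omega)).symm
  obtain ⟨j, hj⟩ := Nat.exists_eq_add_of_le hki
  have h := companion_pow_add_mulVec_apply a v k (i := k) (j := j) (by omega)
  simp only [← hj] at h
  exact h.symm

theorem krylov_companion_mulVec (a : Fin m → R) (v : Fin m → R) :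
    krylov (companion a) v *ᵥ a = -(companion a ^ m *ᵥ v) := by
  funext i
  have hm : m = (i + 1) + (m - 1 - i) := by omega
  have h := companion_pow_add_mulVec_apply a v (i + 1) (i := i) (j := m - 1 - i) (by omega)
  rw [← hm] at h
  rw [Pi.neg_apply, h, pow_succ', ← mulVec_mulVec, companion_mulVec_apply_last a _ (by simp; omega),
    neg_neg]
  change ∑ j, krylov (companion a) v i j * a j = ∑ j, a j * (companion a ^ (i : ℕ) *ᵥ v) j
  exact Finset.sum_congr rfl fun j _ => by rw [mul_comm, krylov, of_apply, companion_pow_mulVec_symm]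

theorem companion_pow_mulVec_lastVec_apply (a : Fin m → R) {i k : ℕ} (h : i + k < m) :
    (companion a ^ k *ᵥ lastVec m) ⟨i, by omega⟩ = if i + k = m - 1 then 1 else 0 := by
  simpa [lastVec] using companion_pow_add_mulVec_apply a (lastVec m) 0 h

theorem isUnit_det_krylov_companion_lastVec (a : Fin m → R) :
    IsUnit (krylov (companion a) (lastVec m)).det := by
  set M := (krylov (companion a) (lastVec m)).submatrix id Fin.revPerm
  have hM : M.IsLowerTriangular := by
    intro i k (hik : i < k)
    have h := companion_pow_mulVec_lastVec_apply a (i := i) (k := m - 1 - k) (by omega)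
    simp only [M, krylov, submatrix_apply, id, of_apply, Fin.revPerm_apply, Fin.val_rev]
    rw [show m - (k + 1) = m - 1 - k by omega, h, if_neg (by omega)]
  have hdiag : ∀ i, M i i = 1 := by
    intro i
    have h := companion_pow_mulVec_lastVec_apply a (i := i) (k := m - 1 - i) (by omega)
    simp only [M, krylov, submatrix_apply, id, of_apply, Fin.revPerm_apply, Fin.val_rev]
    rw [show m - (i + 1) = m - 1 - i by omega, h, if_pos (by omega)]
  have hdet : M.det = 1 := by
    rw [det_of_isLowerTriangular M hM]
    simp [hdiag]
  rw [det_permute'] at hdet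
  exact IsUnit.of_mul_eq_one_right _ hdet

theorem SemiconjBy.mul_krylov {A B L : Matrix (Fin m) (Fin m) R} (h : SemiconjBy L A B)
    (v : Fin m → R) : L * krylov A v = krylov B (L *ᵥ v) := by
  ext i k
  change (L *ᵥ (A ^ (k : ℕ) *ᵥ v)) i = (B ^ (k : ℕ) *ᵥ (L *ᵥ v)) i
  rw [mulVec_mulVec, mulVec_mulVec, (h.pow_right k).eq]

theorem eq_and_eq_one_of_semiconjBy_companion {a b : Fin m → R} {L : Matrix (Fin m) (Fin m) R}
    (hL : SemiconjBy L (companion a) (companion b)) (he : L *ᵥ lastVec m = lastVec m) :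
    a = b ∧ L = 1 := by
  have hK : L * krylov (companion a) (lastVec m) = krylov (companion b) (lastVec m) := by
    rw [hL.mul_krylov, he]
  have hKb : IsUnit (krylov (companion b) (lastVec m)) :=
    (isUnit_iff_isUnit_det _).2 (isUnit_det_krylov_companion_lastVec b)
  have hab : a = b := by
    refine mulVec_injective_of_isUnit hKb ?_
    calc krylov (companion b) (lastVec m) *ᵥ a
        = L *ᵥ (krylov (companion a) (lastVec m) *ᵥ a) := by rw [mulVec_mulVec, hK]
      _ = -(companion b ^ m *ᵥ lastVec m) := by
        rw [krylov_companion_mulVec, mulVec_neg, mulVec_mulVec, (hL.pow_right m).eq,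
          ← mulVec_mulVec, he]
      _ = krylov (companion b) (lastVec m) *ᵥ b := (krylov_companion_mulVec b _).symm
  subst hab
  exact ⟨rfl, hKb.mul_eq_right.1 hK⟩

end Companion

theorem Polynomial.Monic.eq_of_natDegree_eq_of_coeff_eq {R : Type*} [Semiring R] {p q : R[X]}
    (hp : p.Monic) (hq : q.Monic) (hpq : p.natDegree = q.natDegree)
    (h : ∀ i < p.natDegree, p.coeff i = q.coeff i) : p = q := by
  ext i
  rcases lt_trichotomy i p.natDegree with hi | rfl | hi
  · exact h i hi
  · rw [hp.coeff_natDegree, hpq, hq.coeff_natDegree]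
  · rw [coeff_eq_zero_of_natDegree_lt hi, coeff_eq_zero_of_natDegree_lt (hpq ▸ hi)]

theorem exists_perm_of_map_univ_eq {α β : Type*} [Fintype α] [DecidableEq β] {f g : α → β}
    (h : Finset.univ.val.map f = Finset.univ.val.map g) :
    ∃ σ : Equiv.Perm α, ∀ a, g a = f (σ a) := by
  have hcard : ∀ c, Fintype.card {a // g a = c} = Fintype.card {a // f a = c} := by
    intro c
    have := congrArg (Multiset.count c) h
    simp only [Multiset.count_map, Fintype.card_subtype, Finset.card_def, Finset.filter_val] at this ⊢
    simpa only [eq_comm] using this.symm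
  exact ⟨Equiv.ofFiberEquiv fun c => Fintype.equivOfCardEq (hcard c),
    fun a => (Equiv.ofFiberEquiv_map _ a).symm⟩

theorem roots_prod_univ_X_sub_C {R ι : Type*} [CommRing R] [IsDomain R] [Fintype ι] (c : ι → R) :
    (∏ i, (X - C (c i))).roots = Finset.univ.val.map c := by
  rw [roots_prod _ _ (Finset.prod_ne_zero_iff.2 fun i _ => X_sub_C_ne_zero (c i))]
  simp [roots_X_sub_C]

theorem map_univ_eq_of_prod_X_sq_add_C_sq_eq {ι : Type*} [Fintype ι] {d₁ d₂ : ι → ℝ}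
    (hd₁ : ∀ i, 0 < d₁ i) (hd₂ : ∀ i, 0 < d₂ i)
    (h : ∏ i, (X ^ 2 + C (d₁ i ^ 2)) = ∏ i, (X ^ 2 + C (d₂ i ^ 2))) :
    Finset.univ.val.map d₁ = Finset.univ.val.map d₂ := by
  have hexpand : ∀ d : ι → ℝ, ∏ i, (X ^ 2 + C (d i ^ 2)) = expand ℝ 2 (∏ i, (X - C (-d i ^ 2))) := by
    intro d
    simp [map_prod, expand_X, expand_C]
  have hsq : Finset.univ.val.map (fun i => -d₁ i ^ 2) = Finset.univ.val.map (fun i => -d₂ i ^ 2) := by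
    rw [← roots_prod_univ_X_sub_C, ← roots_prod_univ_X_sub_C,
      expand_injective two_pos ((hexpand d₁).symm.trans (h.trans (hexpand d₂)))]
  have hsqrt : ∀ d : ι → ℝ, (∀ i, 0 < d i) →
      (Finset.univ.val.map fun i => -d i ^ 2).map (fun x => √(-x)) = Finset.univ.val.map d := by
    intro d hd
    rw [Multiset.map_map]
    exact Multiset.map_congr rfl fun i _ => by simp [Real.sqrt_sq (hd i).le]
  rw [← hsqrt d₁ hd₁, ← hsqrt d₂ hd₂, hsq]

theorem monic_prod_X_sq_add_C {R ι : Type*} [CommRing R] [Fintype ι] (c : ι → R) :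
    (∏ i, (X ^ 2 + C (c i))).Monic :=
  monic_prod_of_monic _ _ fun _ _ => monic_X_pow_add_C _ two_ne_zero

theorem natDegree_prod_X_sq_add_C {R ι : Type*} [CommRing R] [Nontrivial R] [Fintype ι]
    (c : ι → R) : (∏ i, (X ^ 2 + C (c i))).natDegree = 2 * Fintype.card ι := by
  rw [natDegree_prod_of_monic _ _ fun _ _ => monic_X_pow_add_C _ two_ne_zero]
  simp [mul_comm]

theorem prod_X_sq_add_C_sq_eq_iff {ι : Type*} [Fintype ι] {d₁ d₂ : ι → ℝ}
    (hd₁ : ∀ i, 0 < d₁ i) (hd₂ : ∀ i, 0 < d₂ i) :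
    ∏ i, (X ^ 2 + C (d₁ i ^ 2)) = ∏ i, (X ^ 2 + C (d₂ i ^ 2)) ↔
      ∃ σ : Equiv.Perm ι, ∀ i, d₂ i = d₁ (σ i) := by
  refine ⟨fun h => exists_perm_of_map_univ_eq (map_univ_eq_of_prod_X_sq_add_C_sq_eq hd₁ hd₂ h), ?_⟩
  rintro ⟨σ, hσ⟩
  simp_rw [hσ]
  exact (Equiv.prod_comp σ fun i => X ^ 2 + C (d₁ i ^ 2)).symm

section SymplecticNormalForm

variable {n : ℕ}

theorem g1_eq_companion (d : Fin n → ℝ) : g1 d = companion fun j => coeffA d j := rfl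

theorem g1_eq_g1_iff {d₁ d₂ : Fin n → ℝ} :
    g1 d₁ = g1 d₂ ↔ ∏ j, (X ^ 2 + C (d₁ j ^ 2)) = ∏ j, (X ^ 2 + C (d₂ j ^ 2)) := by
  rw [g1_eq_companion, g1_eq_companion, companion_injective.eq_iff, funext_iff]
  refine ⟨fun h => ?_, fun h j => by rw [coeffA, coeffA, h]⟩
  refine (monic_prod_X_sq_add_C _).eq_of_natDegree_eq_of_coeff_eq (monic_prod_X_sq_add_C _)
    (by rw [natDegree_prod_X_sq_add_C, natDegree_prod_X_sq_add_C]) fun i hi => ?_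
  rw [natDegree_prod_X_sq_add_C, Fintype.card_fin] at hi
  exact h ⟨i, hi⟩

theorem g2_eq_g2_iff {d₁ d₂ : Fin n → ℝ} {v₁ v₂ : Fin n ⊕ Fin n → ℝ} :
    g2 d₁ v₁ = g2 d₂ v₂ ↔ ∀ k < n, cInv d₁ v₁ k = cInv d₂ v₂ k := by
  refine ⟨fun h k hk => ?_, fun h => funext fun j => ?_⟩
  · have := congrFun h ⟨2 * (n - 1 - k) + 1, by omega⟩
    simp only [g2] at this
    rwa [if_pos (by omega), if_pos (by omega),
      show n - 1 - (2 * (n - 1 - k) + 1) / 2 = k by omega] at this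
  · simp only [g2]
    split_ifs
    · exact h _ (by omega)
    · rfl

end SymplecticNormalForm

theorem ctrlHam_sysIso_iff_general {n : ℕ}
    (d₁ d₂ : Fin n → ℝ) (hd₁ : ∀ i, 0 < d₁ i) (hd₂ : ∀ i, 0 < d₂ i)
    (v₁ v₂ : Fin n ⊕ Fin n → ℝ) :
    ((∃ L : Matrix (Fin (2 * n)) (Fin (2 * n)) ℝ,
        IsUnit L ∧ L * g1 d₁ = g1 d₂ * L ∧ L *ᵥ eLast n = eLast n ∧
          g2 d₁ v₁ = g2 d₂ v₂ ᵥ* L) ↔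
      (g1 d₁ = g1 d₂ ∧ g2 d₁ v₁ = g2 d₂ v₂)) ∧
    ((g1 d₁ = g1 d₂ ∧ g2 d₁ v₁ = g2 d₂ v₂) ↔
      (∃ σ : Equiv.Perm (Fin n), (∀ i, d₂ i = d₁ (σ i)) ∧
        ∀ k < n, cInv d₁ v₁ k = cInv d₂ v₂ k)) := by
  refine ⟨⟨?_, ?_⟩, ?_⟩
  · rintro ⟨L, -, hL, he, hg2⟩
    obtain ⟨hc, rfl⟩ := eq_and_eq_one_of_semiconjBy_companion hL he
    exact ⟨congrArg companion hc, by rwa [vecMul_one] at hg2⟩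
  · rintro ⟨hg1, hg2⟩
    exact ⟨1, isUnit_one, by rw [one_mul, mul_one, hg1], one_mulVec _, by rw [hg2, vecMul_one]⟩
  · rw [g1_eq_g1_iff, prod_X_sq_add_C_sq_eq_iff hd₁ hd₂, g2_eq_g2_iff, exists_and_right]

/-- Two controllable Hamiltonian representations are system isomorphic iff
`g₁(d₁) = g₁(d₂)` and `g₂(d₁,v₁) = g₂(d₂,v₂)`; equivalently, the multisets of
symplectic eigenvalues coincide and all quadratic invariants `c_{2k+1}` agree. -/
theorem ctrlHam_sysIso_iff {n : ℕ} (hn : 0 < n)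
    (d₁ d₂ : Fin n → ℝ) (hd₁ : ∀ i, 0 < d₁ i) (hd₂ : ∀ i, 0 < d₂ i)
    (v₁ v₂ : Fin n ⊕ Fin n → ℝ) :
    ((∃ L : Matrix (Fin (2 * n)) (Fin (2 * n)) ℝ,
        IsUnit L ∧ L * g1 d₁ = g1 d₂ * L ∧ L *ᵥ eLast n = eLast n ∧
          g2 d₁ v₁ = g2 d₂ v₂ ᵥ* L) ↔
      (g1 d₁ = g1 d₂ ∧ g2 d₁ v₁ = g2 d₂ v₂)) ∧
    ((g1 d₁ = g1 d₂ ∧ g2 d₁ v₁ = g2 d₂ v₂) ↔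
      (∃ σ : Equiv.Perm (Fin n), (∀ i, d₂ i = d₁ (σ i)) ∧
        ∀ k < n, cInv d₁ v₁ k = cInv d₂ v₂ k)) :=
  ctrlHam_sysIso_iff_general d₁ d₂ hd₁ hd₂ v₁ v₂
end
end

section
/- Two pairs (d_1,v_1), (d_2,v_2) ∈ ℝ_+^n × ℝ^{2n} lie in the same orbit of the (S_n ⋉_φ 𝕋^n)-action Γ if and only if there exists σ ∈ S_n such that d_{2,i} = d_{1,σ(i)} and v_{2,i}² + v_{2,n+i}² = v_{1,σ(i)}² + v_{1,n+σ(i)}² for all i = 1,…,n. -/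
/-!
An element `(σ, θ)` acts on `v` by moving the coordinate plane `(v_l, v_{n+l})` to position
`σ l` and then rotating it by `θ (σ l)`, independently for each `l`. Identifying each plane with
`ℂ`, a rotation is multiplication by a unit complex number, and two complex numbers differ by such
a factor exactly when they have the same modulus.
-/

noncomputable section
open Matrix

/-- Block rotation: rotate the plane spanned by the `i`-th and `(n+i)`-th coordinates
of `v` by the angle `θ i`. -/
def rotV {n : ℕ} (θ : Fin n → Real.Angle) (v : Fin n ⊕ Fin n → ℝ) :
    Fin n ⊕ Fin n → ℝ :=
  Sum.elim (fun i => (θ i).cos * v (Sum.inl i) - (θ i).sin * v (Sum.inr i))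
           (fun i => (θ i).sin * v (Sum.inl i) + (θ i).cos * v (Sum.inr i))

/-- Block permutation `P = diag(P_σ, P_σ)` acting on `v`, `(P_σ x)_i = x_{σ⁻¹ i}`. -/
def permV {n : ℕ} (σ : Equiv.Perm (Fin n)) (v : Fin n ⊕ Fin n → ℝ) :
    Fin n ⊕ Fin n → ℝ :=
  Sum.elim (fun i => v (Sum.inl (σ⁻¹ i))) (fun i => v (Sum.inr (σ⁻¹ i)))

/-- The map `Γ_{(σ,θ)}(d, v) = (P_σ d, R_θ P v)`. -/
def Gamma {n : ℕ} (σ : Equiv.Perm (Fin n)) (θ : Fin n → Real.Angle)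
    (p : (Fin n → ℝ) × (Fin n ⊕ Fin n → ℝ)) :
    (Fin n → ℝ) × (Fin n ⊕ Fin n → ℝ) :=
  (p.1 ∘ ⇑σ⁻¹, rotV θ (permV σ p.2))

namespace Complex

attribute [local instance] finrank_real_complex_fact

theorem exists_toCircle_mul_eq_iff_norm_eq {a b : ℂ} :
    (∃ θ : Real.Angle, θ.toCircle * a = b) ↔ ‖a‖ = ‖b‖ := by
  constructor
  · rintro ⟨θ, rfl⟩
    rw [norm_mul, Circle.norm_coe, one_mul]
  · intro h
    refine ⟨Complex.orientation.oangle a b, ?_⟩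
    rw [← Complex.rotation]
    exact (Complex.orientation.rotation_oangle_eq_iff_norm_eq a b).2 h

end Complex

theorem Real.Angle.exists_rotate_eq_iff_sq_add_sq_eq {x y x' y' : ℝ} :
    (∃ θ : Real.Angle, θ.cos * x - θ.sin * y = x' ∧ θ.sin * x + θ.cos * y = y') ↔
      x' ^ 2 + y' ^ 2 = x ^ 2 + y ^ 2 := by
  have hrot (θ : Real.Angle) : θ.toCircle * ⟨x, y⟩ = (⟨x', y'⟩ : ℂ) ↔
      θ.cos * x - θ.sin * y = x' ∧ θ.sin * x + θ.cos * y = y' := by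
    simp [Complex.ext_iff, Real.Angle.coe_toCircle, add_comm]
  have hnorm : ‖(⟨x, y⟩ : ℂ)‖ = ‖(⟨x', y'⟩ : ℂ)‖ ↔ x' ^ 2 + y' ^ 2 = x ^ 2 + y ^ 2 := by
    rw [← sq_eq_sq₀ (norm_nonneg _) (norm_nonneg _), Complex.sq_norm, Complex.sq_norm,
      Complex.normSq_mk, Complex.normSq_mk, eq_comm]
    ring_nf
  simp_rw [← hrot, Complex.exists_toCircle_mul_eq_iff_norm_eq, hnorm]

section BlockAction

variable {n : ℕ}

theorem rotV_eq_iff {θ : Fin n → Real.Angle} {v w : Fin n ⊕ Fin n → ℝ} :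
    rotV θ v = w ↔ ∀ i,
      (θ i).cos * v (.inl i) - (θ i).sin * v (.inr i) = w (.inl i) ∧
        (θ i).sin * v (.inl i) + (θ i).cos * v (.inr i) = w (.inr i) := by
  simp [funext_iff, rotV, Sum.forall, forall_and]

theorem exists_rotV_eq_iff {v w : Fin n ⊕ Fin n → ℝ} :
    (∃ θ, rotV θ v = w) ↔
      ∀ i, w (.inl i) ^ 2 + w (.inr i) ^ 2 = v (.inl i) ^ 2 + v (.inr i) ^ 2 := by
  simp only [rotV_eq_iff]
  exact Classical.skolem.symm.trans
    (forall_congr' fun _ ↦ Real.Angle.exists_rotate_eq_iff_sq_add_sq_eq)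

@[simp]
theorem permV_inl (σ : Equiv.Perm (Fin n)) (v : Fin n ⊕ Fin n → ℝ) (i : Fin n) :
    permV σ v (.inl i) = v (.inl (σ⁻¹ i)) :=
  rfl

@[simp]
theorem permV_inr (σ : Equiv.Perm (Fin n)) (v : Fin n ⊕ Fin n → ℝ) (i : Fin n) :
    permV σ v (.inr i) = v (.inr (σ⁻¹ i)) :=
  rfl

end BlockAction

theorem Gamma_orbit_iff_general {n : ℕ}
    (d₁ d₂ : Fin n → ℝ) (v₁ v₂ : Fin n ⊕ Fin n → ℝ) :
    (∃ (σ : Equiv.Perm (Fin n)) (θ : Fin n → Real.Angle),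
        Gamma σ θ (d₁, v₁) = (d₂, v₂)) ↔
      ∃ σ : Equiv.Perm (Fin n),
        (∀ i, d₂ i = d₁ (σ i)) ∧
        ∀ i, v₂ (Sum.inl i) ^ 2 + v₂ (Sum.inr i) ^ 2
            = v₁ (Sum.inl (σ i)) ^ 2 + v₁ (Sum.inr (σ i)) ^ 2 := by
  simp only [Gamma, Prod.mk.injEq, exists_and_left, exists_rotV_eq_iff, permV_inl, permV_inr]
  rw [inv_surjective.exists]
  simp only [inv_inv, funext_iff, Function.comp_apply, eq_comm]

/-- Two pairs `(d₁,v₁)` and `(d₂,v₂)` in `ℝ₊ⁿ × ℝ^{2n}` lie in the same orbit of the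
`(S_n ⋉ 𝕋ⁿ)`-action iff some permutation matches the `d`'s and the plane radii
`vₗ² + v_{n+l}²`. -/
theorem Gamma_orbit_iff {n : ℕ}
    (d₁ d₂ : Fin n → ℝ) (hd₁ : ∀ i, 0 < d₁ i) (hd₂ : ∀ i, 0 < d₂ i)
    (v₁ v₂ : Fin n ⊕ Fin n → ℝ) :
    (∃ (σ : Equiv.Perm (Fin n)) (θ : Fin n → Real.Angle),
        Gamma σ θ (d₁, v₁) = (d₂, v₂)) ↔
      ∃ σ : Equiv.Perm (Fin n),
        (∀ i, d₂ i = d₁ (σ i)) ∧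
        ∀ i, v₂ (Sum.inl i) ^ 2 + v₂ (Sum.inr i) ^ 2
            = v₁ (Sum.inl (σ i)) ^ 2 + v₁ (Sum.inr (σ i)) ^ 2 :=
  Gamma_orbit_iff_general d₁ d₂ v₁ v₂
end
end
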